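/- Let S, T : Fin 4 → Fin 4 → Fin 4 → Fin 4 → ℝ be 4-index arrays, each of boost order ≤ −1 with respect to the boost weights w. Then the 2-index array P(a,b) = ∑_{c,c',d,d',e,e'} g(c,c') g(d,d') g(e,e') · S(a,c,d,e) · T(b,c',d',e') satisfies P(a,b) = 0 for every (a,b) ≠ (1,1); that is, P is a multiple of ℓ_a ℓ_b where ℓ_a = g(0,a). (Rank-2 tensors built quadratically from tensors of boost order ≤ −1, such as F₂ = C^{pqrs}_{;a} C_{pqrs;b} for type III Weyl tensors, are proportional to ℓ_a ℓ_b.) -/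

import Mathlib

/-!
A nonzero metric component `g(x, y)` pairs indices of opposite boost weight, so each term of
the contraction carries total weight `w(a) + w(b)` plus the weights of the contracted indices of
`S` and `T`, which cancel in pairs. A nonzero term therefore has `w(a) + w(b) ≤ -2`; as no weight
is below `-1`, this forces `a = b = 1`.
-/

/-- The null-frame metric on a 4-dimensional Lorentzian vector space:
`g 0 1 = g 1 0 = 1`, `g 2 2 = g 3 3 = 1`, all other components vanish. -/
def gnf : Fin 4 → Fin 4 → ℝ := fun a b =>
  if (a = 0 ∧ b = 1) ∨ (a = 1 ∧ b = 0) ∨ (a = 2 ∧ b = 2) ∨ (a = 3 ∧ b = 3) then 1 else 0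

/-- Boost weights of the null-frame indices: `w 0 = 1`, `w 1 = -1`, `w 2 = w 3 = 0`. -/
def bw : Fin 4 → ℤ := ![1, -1, 0, 0]

section BoostOrder

variable {ι R : Type*} (w : ι → ℤ)

def HasBoostOrderLE [Zero R] (T : ι → ι → ι → ι → R) (k : ℤ) : Prop :=
  ∀ a b c d, w a + w b + w c + w d > k → T a b c d = 0

variable {w}

theorem HasBoostOrderLE.weight_le_of_ne_zero [Zero R] {T : ι → ι → ι → ι → R} {k : ℤ}
    (hT : HasBoostOrderLE w T k) {a b c d : ι} (h : T a b c d ≠ 0) :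
    w a + w b + w c + w d ≤ k :=
  not_lt.mp fun hlt => h (hT a b c d hlt)

theorem weight_add_le_of_contraction_term_ne_zero [MulZeroClass R] {g : ι → ι → R}
    (hg : ∀ x y, g x y ≠ 0 → w x + w y = 0) {S T : ι → ι → ι → ι → R} {k m : ℤ}
    (hS : HasBoostOrderLE w S k) (hT : HasBoostOrderLE w T m) {a b c c' d d' e e' : ι}
    (h : g c c' * g d d' * g e e' * S a c d e * T b c' d' e' ≠ 0) :
    w a + w b ≤ k + m := by
  have hgS := left_ne_zero_of_mul h
  have hggg := left_ne_zero_of_mul hgS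
  have hgg := left_ne_zero_of_mul hggg
  have hc := hg c c' (left_ne_zero_of_mul hgg)
  have hd := hg d d' (right_ne_zero_of_mul hgg)
  have he := hg e e' (right_ne_zero_of_mul hggg)
  have hSw := hS.weight_le_of_ne_zero (right_ne_zero_of_mul hgS)
  have hTw := hT.weight_le_of_ne_zero (right_ne_zero_of_mul h)
  omega

end BoostOrder

theorem bw_add_eq_zero_of_gnf_ne_zero (x y : Fin 4) (h : gnf x y ≠ 0) : bw x + bw y = 0 := by
  fin_cases x <;> fin_cases y <;> simp [gnf, bw] at h ⊢

theorem neg_one_le_bw (x : Fin 4) : -1 ≤ bw x := by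
  fin_cases x <;> decide

theorem eq_one_of_bw_eq_neg_one {x : Fin 4} (h : bw x = -1) : x = 1 := by
  fin_cases x <;> simp [bw] at h ⊢

/-- A rank-2 tensor built quadratically (with a triple metric contraction) from
two 4-index arrays of boost order `≤ -1` is a multiple of `ℓ_a ℓ_b`: all its
components other than the `(1,1)` component vanish. -/
theorem rank2_quadratic_boostOrder (S T : Fin 4 → Fin 4 → Fin 4 → Fin 4 → ℝ)
    (hS : ∀ a b c d : Fin 4, bw a + bw b + bw c + bw d > -1 → S a b c d = 0)
    (hT : ∀ a b c d : Fin 4, bw a + bw b + bw c + bw d > -1 → T a b c d = 0)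
    (a b : Fin 4) (hab : (a, b) ≠ (1, 1)) :
    (∑ c, ∑ c', ∑ d, ∑ d', ∑ e, ∑ e',
        gnf c c' * gnf d d' * gnf e e' * S a c d e * T b c' d' e') = 0 := by
  refine Finset.sum_eq_zero fun c _ => Finset.sum_eq_zero fun c' _ =>
    Finset.sum_eq_zero fun d _ => Finset.sum_eq_zero fun d' _ =>
    Finset.sum_eq_zero fun e _ => Finset.sum_eq_zero fun e' _ => ?_
  by_contra hterm
  have hab_weight : bw a + bw b ≤ -2 :=
    weight_add_le_of_contraction_term_ne_zero bw_add_eq_zero_of_gnf_ne_zero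
      hS hT hterm
  have ha := neg_one_le_bw a
  have hb := neg_one_le_bw b
  obtain rfl : a = 1 := eq_one_of_bw_eq_neg_one (by omega)
  obtain rfl : b = 1 := eq_one_of_bw_eq_neg_one (by omega)
  exact hab rfl
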